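/- arXiv:1311.3217 — 5 statements merged into one kernel-verified Lean document; each statement's English description precedes it below -/
import Mathlib

section
/- Let I ⊆ ℝ be an open interval with 0 ∉ I, let ℏ ∈ ℂ be nonzero, let θ₀, θ₁, θ∞ ∈ ℂ, and let z, y, u : I → ℂ be differentiable functions with y(t) ≠ 0 for all t ∈ I, satisfying the Painlevé 5 differential system. Define σ(t) = −2z(t)² − z(t)(2θ₀+θ∞+t) + y(t)z(t)(z(t)+(θ₀−θ₁+θ∞)/2) + ((z(t)+θ₀)/y(t))(z(t)+(θ₀+θ₁+θ∞)/2). Then σ is differentiable on I and σ′(t) = −z(t) for all t ∈ I. -/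
/-!
σ is the Hamiltonian `H(t, z, y)` of the system evaluated along the solution: the first two
equations read `-πℏt y' = -y ∂H/∂z` and `-πℏt z' = y ∂H/∂y`, i.e. Hamilton's equations for the
symplectic form `dz ∧ dy / y`. Hence the chain rule terms `∂H/∂z z' + ∂H/∂y y'` cancel and only
the explicit time derivative `∂H/∂t = -z` survives.
-/

noncomputable def p5Sigma (θ₀ θ₁ θinf t z y : ℂ) : ℂ :=
  -2 * z ^ 2 - z * (2 * θ₀ + θinf + t) + y * z * (z + (θ₀ - θ₁ + θinf) / 2)
    + ((z + θ₀) / y) * (z + (θ₀ + θ₁ + θinf) / 2)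

noncomputable def p5SigmaDerivZ (θ₀ θ₁ θinf t z y : ℂ) : ℂ :=
  -4 * z - (2 * θ₀ + θinf + t) + y * (2 * z + (θ₀ - θ₁ + θinf) / 2)
    + (2 * z + θ₀ + (θ₀ + θ₁ + θinf) / 2) / y

noncomputable def p5SigmaDerivY (θ₀ θ₁ θinf z y : ℂ) : ℂ :=
  z * (z + (θ₀ - θ₁ + θinf) / 2) - (z + θ₀) * (z + (θ₀ + θ₁ + θinf) / 2) / y ^ 2

theorem hasDerivAt_p5Sigma_comp (θ₀ θ₁ θinf : ℂ) {z y : ℝ → ℂ} {z' y' : ℂ} {t : ℝ}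
    (hz : HasDerivAt z z' t) (hy : HasDerivAt y y' t) (hy0 : y t ≠ 0) :
    HasDerivAt (fun s : ℝ => p5Sigma θ₀ θ₁ θinf s (z s) (y s))
      (-z t + p5SigmaDerivZ θ₀ θ₁ θinf t (z t) (y t) * z'
        + p5SigmaDerivY θ₀ θ₁ θinf (z t) (y t) * y') t := by
  have hs : HasDerivAt (fun s : ℝ => (s : ℂ)) 1 t := by
    simpa using (hasDerivAt_id t).ofReal_comp
  have hquad := ((hz.pow 2).const_mul (-2)).sub (hz.mul (hs.const_add (2 * θ₀ + θinf)))
  have hyz := (hy.mul hz).mul (hz.add_const ((θ₀ - θ₁ + θinf) / 2))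
  have hzy := ((hz.add_const θ₀).div hy hy0).mul (hz.add_const ((θ₀ + θ₁ + θinf) / 2))
  have hD := (hquad.add hyz).add hzy
  refine hD.congr_deriv ?_
  simp only [p5SigmaDerivZ, p5SigmaDerivY, Pi.mul_apply, Pi.div_apply]
  field_simp
  ring

theorem p5_y_rhs_eq_neg_mul_derivZ (θ₀ θ₁ θinf t z : ℂ) {y : ℂ} (hy : y ≠ 0) :
    t * y - 2 * z * (y - 1) ^ 2 - (y - 1) * ((θ₀ - θ₁ + θinf) / 2 * y - (3 * θ₀ + θ₁ + θinf) / 2)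
      = -(y * p5SigmaDerivZ θ₀ θ₁ θinf t z y) := by
  simp only [p5SigmaDerivZ]
  field_simp
  ring

theorem p5_z_rhs_eq_mul_derivY (θ₀ θ₁ θinf z : ℂ) {y : ℂ} (hy : y ≠ 0) :
    y * z * (z + (θ₀ - θ₁ + θinf) / 2) - (1 / y) * (z + θ₀) * (z + (θ₀ + θ₁ + θinf) / 2)
      = y * p5SigmaDerivY θ₀ θ₁ θinf z y := by
  simp only [p5SigmaDerivY]
  field_simp

theorem hamilton_chain_terms_cancel {K : Type*} [Field K] {c w q' p' Hq Hp : K} (hc : c ≠ 0)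
    (hq : c * q' = w * Hp) (hp : c * p' = -(w * Hq)) :
    Hq * q' + Hp * p' = 0 := by
  apply mul_left_cancel₀ hc
  linear_combination Hq * hq + Hp * hp

theorem statement1_general
    (I : Set ℝ) (hI0 : (0 : ℝ) ∉ I)
    (ℏ : ℂ) (hℏ : ℏ ≠ 0) (θ₀ θ₁ θinf : ℂ)
    (z y u : ℝ → ℂ)
    (hz : ∀ t ∈ I, DifferentiableAt ℝ z t)
    (hy : ∀ t ∈ I, DifferentiableAt ℝ y t)
    (hy0 : ∀ t ∈ I, y t ≠ 0)
    (hsys : ∀ t ∈ I,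
      (-(Real.pi : ℂ) * ℏ * (t : ℂ) * deriv y t
        = (t : ℂ) * y t - 2 * z t * (y t - 1) ^ 2
          - (y t - 1) * ((θ₀ - θ₁ + θinf) / 2 * y t - (3 * θ₀ + θ₁ + θinf) / 2))
      ∧ (-(Real.pi : ℂ) * ℏ * (t : ℂ) * deriv z t
        = y t * z t * (z t + (θ₀ - θ₁ + θinf) / 2)
          - (1 / y t) * (z t + θ₀) * (z t + (θ₀ + θ₁ + θinf) / 2))
      ∧ (-(Real.pi : ℂ) * ℏ * (t : ℂ) * deriv u t / u t
        = -2 * z t - θ₀ + y t * (z t + (θ₀ - θ₁ + θinf) / 2)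
          + (1 / y t) * (z t + (θ₀ + θ₁ + θinf) / 2)))
    (σ : ℝ → ℂ)
    (hσ : ∀ t : ℝ, σ t = -2 * z t ^ 2 - z t * (2 * θ₀ + θinf + (t : ℂ))
        + y t * z t * (z t + (θ₀ - θ₁ + θinf) / 2)
        + ((z t + θ₀) / y t) * (z t + (θ₀ + θ₁ + θinf) / 2)) :
    ∀ t ∈ I, DifferentiableAt ℝ σ t ∧ deriv σ t = -z t := by
  intro t ht
  have ht0 : (t : ℂ) ≠ 0 := Complex.ofReal_ne_zero.2 (ne_of_mem_of_not_mem ht hI0)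
  have hc : -(Real.pi : ℂ) * ℏ * t ≠ 0 := by simp [hℏ, ht0, Real.pi_ne_zero]
  obtain ⟨hy_eq, hz_eq, -⟩ := hsys t ht
  have hcancel := hamilton_chain_terms_cancel hc
    (hz_eq.trans (p5_z_rhs_eq_mul_derivY θ₀ θ₁ θinf _ (hy0 t ht)))
    (hy_eq.trans (p5_y_rhs_eq_neg_mul_derivZ θ₀ θ₁ θinf _ _ (hy0 t ht)))
  have hD := hasDerivAt_p5Sigma_comp θ₀ θ₁ θinf (hz t ht).hasDerivAt (hy t ht).hasDerivAt
    (hy0 t ht)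
  rw [add_assoc, hcancel, add_zero] at hD
  obtain rfl : σ = fun s : ℝ => p5Sigma θ₀ θ₁ θinf s (z s) (y s) := funext hσ
  exact ⟨hD.differentiableAt, hD.deriv⟩

/-- If (z, y, u) solves the Painlevé 5 differential system on an open interval I
not containing 0, and σ is the associated σ-function, then σ is differentiable on I
and σ′(t) = −z(t). -/
theorem statement1
    (I : Set ℝ) (hIopen : IsOpen I) (hIconn : I.OrdConnected) (hI0 : (0 : ℝ) ∉ I)
    (ℏ : ℂ) (hℏ : ℏ ≠ 0) (θ₀ θ₁ θinf : ℂ)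
    (z y u : ℝ → ℂ)
    (hz : ∀ t ∈ I, DifferentiableAt ℝ z t)
    (hy : ∀ t ∈ I, DifferentiableAt ℝ y t)
    (hu : ∀ t ∈ I, DifferentiableAt ℝ u t)
    (hy0 : ∀ t ∈ I, y t ≠ 0)
    (hsys : ∀ t ∈ I,
      (-(Real.pi : ℂ) * ℏ * (t : ℂ) * deriv y t
        = (t : ℂ) * y t - 2 * z t * (y t - 1) ^ 2
          - (y t - 1) * ((θ₀ - θ₁ + θinf) / 2 * y t - (3 * θ₀ + θ₁ + θinf) / 2))
      ∧ (-(Real.pi : ℂ) * ℏ * (t : ℂ) * deriv z t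
        = y t * z t * (z t + (θ₀ - θ₁ + θinf) / 2)
          - (1 / y t) * (z t + θ₀) * (z t + (θ₀ + θ₁ + θinf) / 2))
      ∧ (-(Real.pi : ℂ) * ℏ * (t : ℂ) * deriv u t / u t
        = -2 * z t - θ₀ + y t * (z t + (θ₀ - θ₁ + θinf) / 2)
          + (1 / y t) * (z t + (θ₀ + θ₁ + θinf) / 2)))
    (σ : ℝ → ℂ)
    (hσ : ∀ t : ℝ, σ t = -2 * z t ^ 2 - z t * (2 * θ₀ + θinf + (t : ℂ))
        + y t * z t * (z t + (θ₀ - θ₁ + θinf) / 2)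
        + ((z t + θ₀) / y t) * (z t + (θ₀ + θ₁ + θinf) / 2)) :
    ∀ t ∈ I, DifferentiableAt ℝ σ t ∧ deriv σ t = -z t :=
  statement1_general I hI0 ℏ hℏ θ₀ θ₁ θinf z y u hz hy hy0 hsys σ hσ
end

section
/- Let I ⊆ ℝ be an open interval with 0 ∉ I, let ℏ ∈ ℂ be nonzero, let θ₀, θ₁, θ∞ ∈ ℂ, and let z, y, u : I → ℂ be functions with y nonvanishing, z twice differentiable and y differentiable, satisfying the Painlevé 5 differential system. Define σ(t) = −2z(t)² − z(t)(2θ₀+θ∞+t) + y(t)z(t)(z(t)+(θ₀−θ₁+θ∞)/2) + ((z(t)+θ₀)/y(t))(z(t)+(θ₀+θ₁+θ∞)/2). Then σ is twice differentiable and satisfies the σ-form of the Painlevé 5 equation on I: −(πℏ t σ″)² + (σ + 2(σ′)² − (2θ₀+θ∞+t)σ′)² = 4σ′(σ′−θ₀)(σ′ − (θ₀−θ₁+θ∞)/2)(σ′ − (θ₀+θ₁+θ∞)/2). -/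
/-!
With `a = (θ₀ - θ₁ + θ∞)/2` and `b = (θ₀ + θ₁ + θ∞)/2`, σ is the Hamiltonian `H(t, z, y)` of the
system in the canonical coordinates `(z, log y)`: the first two equations read
`πℏt (log y)' = ∂H/∂z` and `πℏt z' = -y ∂H/∂y`. Along a solution the total derivative of `H` is
therefore its explicit `t`-derivative, `σ' = -z`, and then `πℏt σ'' = -πℏt z' = y ∂H/∂y = yP - Q/y`
with `P = z(z + a)`, `Q = (z + θ₀)(z + b)`. Since also `σ + 2σ'² - (2θ₀ + θ∞ + t)σ' = yP + Q/y`,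
the σ-form is the identity `(yP + Q/y)² - (yP - Q/y)² = 4PQ`.
-/

open Topology

/-- `a, b, c, e` stand for `(θ₀ - θ₁ + θ∞)/2`, `(θ₀ + θ₁ + θ∞)/2`, `2θ₀ + θ∞` and `θ₀`. -/
noncomputable def p5Hamiltonian (a b c e : ℂ) (t : ℝ) (z y : ℂ) : ℂ :=
  -2 * z ^ 2 - z * (c + (t : ℂ)) + y * z * (z + a) + ((z + e) / y) * (z + b)

section Hamiltonian

variable {a b c e κ z' y' : ℂ} {z y : ℝ → ℂ} {t : ℝ}

theorem hasDerivAt_p5Hamiltonian_comp (hz : HasDerivAt z z' t) (hy : HasDerivAt y y' t)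
    (hy0 : y t ≠ 0) :
    HasDerivAt (fun s => p5Hamiltonian a b c e s (z s) (y s))
      ((-4 * z t - (c + (t : ℂ)) + y t * (2 * z t + a) + (2 * z t + e + b) / y t) * z'
        + (z t * (z t + a) - (z t + e) * (z t + b) / y t ^ 2) * y' - z t) t := by
  have hsq : HasDerivAt (fun s => z s ^ 2) (z' * z t + z t * z') t := by
    simp only [sq]; exact hz.mul hz
  have hlin : HasDerivAt (fun s : ℝ => c + (s : ℂ)) 1 t := by
    simpa using ((hasDerivAt_id t).ofReal_comp).const_add c
  have hH : HasDerivAt (fun s => p5Hamiltonian a b c e s (z s) (y s)) _ t :=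
    (((hsq.const_mul (-2)).sub (hz.mul hlin)).add ((hy.mul hz).mul (hz.add_const a))).add
      (((hz.add_const e).div hy hy0).mul (hz.add_const b))
  refine hH.congr_deriv ?_
  simp only [Pi.mul_apply, Pi.div_apply]
  field_simp
  ring

/-- `hy'` and `hz'` are Hamilton's equations `κ y' = -y ∂H/∂z`, `κ z' = y ∂H/∂y`, so `H` varies
only through its explicit time dependence, `∂H/∂t = -z`. -/
theorem hasDerivAt_p5Hamiltonian_of_hamilton_eqs (hκ : κ ≠ 0) (hz : HasDerivAt z z' t)
    (hy : HasDerivAt y y' t) (hy0 : y t ≠ 0)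
    (hy' : κ * y' = 4 * z t * y t + (c + (t : ℂ)) * y t - y t ^ 2 * (2 * z t + a)
      - (2 * z t + e + b))
    (hz' : κ * z' = y t * z t * (z t + a) - (z t + e) * (z t + b) / y t) :
    HasDerivAt (fun s => p5Hamiltonian a b c e s (z s) (y s)) (-z t) t := by
  refine (hasDerivAt_p5Hamiltonian_comp hz hy hy0).congr_deriv ?_
  set Hz := -4 * z t - (c + (t : ℂ)) + y t * (2 * z t + a) + (2 * z t + e + b) / y t
  set Hy := z t * (z t + a) - (z t + e) * (z t + b) / y t ^ 2
  have hy' : κ * y' = -y t * Hz := by rw [hy']; simp only [Hz]; field_simp; ring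
  have hz' : κ * z' = y t * Hy := by rw [hz']; simp only [Hy]; field_simp
  apply mul_left_cancel₀ hκ
  linear_combination Hz * hz' + Hy * hy'

end Hamiltonian

theorem p5_sigma_form_identity (a b c e : ℂ) (t : ℝ) (z y : ℂ) (hy : y ≠ 0) :
    -(y * z * (z + a) - (z + e) * (z + b) / y) ^ 2
      + (p5Hamiltonian a b c e t z y + 2 * (-z) ^ 2 - (c + (t : ℂ)) * (-z)) ^ 2
      = 4 * (-z) * (-z - e) * (-z - a) * (-z - b) := by
  unfold p5Hamiltonian
  field_simp
  ring

theorem statement2_general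
    (I : Set ℝ) (hIopen : IsOpen I) (hI0 : (0 : ℝ) ∉ I)
    (ℏ : ℂ) (hℏ : ℏ ≠ 0) (θ₀ θ₁ θinf : ℂ)
    (z y u : ℝ → ℂ)
    (hz : ∀ t ∈ I, DifferentiableAt ℝ z t)
    (hy : ∀ t ∈ I, DifferentiableAt ℝ y t)
    (hy0 : ∀ t ∈ I, y t ≠ 0)
    (hsys : ∀ t ∈ I,
      (-(Real.pi : ℂ) * ℏ * (t : ℂ) * deriv y t
        = (t : ℂ) * y t - 2 * z t * (y t - 1) ^ 2
          - (y t - 1) * ((θ₀ - θ₁ + θinf) / 2 * y t - (3 * θ₀ + θ₁ + θinf) / 2))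
      ∧ (-(Real.pi : ℂ) * ℏ * (t : ℂ) * deriv z t
        = y t * z t * (z t + (θ₀ - θ₁ + θinf) / 2)
          - (1 / y t) * (z t + θ₀) * (z t + (θ₀ + θ₁ + θinf) / 2))
      ∧ (-(Real.pi : ℂ) * ℏ * (t : ℂ) * deriv u t / u t
        = -2 * z t - θ₀ + y t * (z t + (θ₀ - θ₁ + θinf) / 2)
          + (1 / y t) * (z t + (θ₀ + θ₁ + θinf) / 2)))
    (σ : ℝ → ℂ)
    (hσ : ∀ t : ℝ, σ t = -2 * z t ^ 2 - z t * (2 * θ₀ + θinf + (t : ℂ))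
        + y t * z t * (z t + (θ₀ - θ₁ + θinf) / 2)
        + ((z t + θ₀) / y t) * (z t + (θ₀ + θ₁ + θinf) / 2)) :
    ∀ t ∈ I, DifferentiableAt ℝ σ t ∧ DifferentiableAt ℝ (deriv σ) t ∧
      -((Real.pi : ℂ) * ℏ * (t : ℂ) * deriv (deriv σ) t) ^ 2
        + (σ t + 2 * (deriv σ t) ^ 2 - (2 * θ₀ + θinf + (t : ℂ)) * deriv σ t) ^ 2
      = 4 * deriv σ t * (deriv σ t - θ₀) * (deriv σ t - (θ₀ - θ₁ + θinf) / 2)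
          * (deriv σ t - (θ₀ + θ₁ + θinf) / 2) := by
  have hσH : σ = fun s => p5Hamiltonian ((θ₀ - θ₁ + θinf) / 2) ((θ₀ + θ₁ + θinf) / 2)
      (2 * θ₀ + θinf) θ₀ s (z s) (y s) := funext hσ
  have hσ' : ∀ s ∈ I, HasDerivAt σ (-z s) s := by
    intro s hs
    obtain ⟨hys, hzs, -⟩ := hsys s hs
    have hκ : -(Real.pi : ℂ) * ℏ * (s : ℂ) ≠ 0 := by
      simp [Real.pi_ne_zero, hℏ, ne_of_mem_of_not_mem hs hI0]
    rw [hσH]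
    exact hasDerivAt_p5Hamiltonian_of_hamilton_eqs hκ (hz s hs).hasDerivAt (hy s hs).hasDerivAt
      (hy0 s hs) (by linear_combination hys) (by linear_combination hzs)
  intro t ht
  have hσ'_eq : deriv σ =ᶠ[𝓝 t] fun s => -z s := by
    filter_upwards [hIopen.mem_nhds ht] with s hs using (hσ' s hs).deriv
  have hσ'' : HasDerivAt (deriv σ) (-deriv z t) t :=
    (hz t ht).hasDerivAt.neg.congr_of_eventuallyEq hσ'_eq
  refine ⟨(hσ' t ht).differentiableAt, hσ''.differentiableAt, ?_⟩
  have hπℏtσ'' : (Real.pi : ℂ) * ℏ * (t : ℂ) * -deriv z t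
      = y t * z t * (z t + (θ₀ - θ₁ + θinf) / 2)
        - (z t + θ₀) * (z t + (θ₀ + θ₁ + θinf) / 2) / y t := by
    linear_combination (hsys t ht).2.1
  rw [hσ''.deriv, (hσ' t ht).deriv, hσ t, hπℏtσ'']
  exact p5_sigma_form_identity _ _ _ _ t (z t) (y t) (hy0 t ht)

/-- If (z, y, u) solves the Painlevé 5 differential system on an open interval I
not containing 0, with z twice differentiable and y, u differentiable, then the
associated σ-function is twice differentiable and satisfies the σ-form of the
Painlevé 5 equation on I. -/
theorem statement2
    (I : Set ℝ) (hIopen : IsOpen I) (hIconn : I.OrdConnected) (hI0 : (0 : ℝ) ∉ I)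
    (ℏ : ℂ) (hℏ : ℏ ≠ 0) (θ₀ θ₁ θinf : ℂ)
    (z y u : ℝ → ℂ)
    (hz : ∀ t ∈ I, DifferentiableAt ℝ z t)
    (hz' : ∀ t ∈ I, DifferentiableAt ℝ (deriv z) t)
    (hy : ∀ t ∈ I, DifferentiableAt ℝ y t)
    (hu : ∀ t ∈ I, DifferentiableAt ℝ u t)
    (hy0 : ∀ t ∈ I, y t ≠ 0)
    (hsys : ∀ t ∈ I,
      (-(Real.pi : ℂ) * ℏ * (t : ℂ) * deriv y t
        = (t : ℂ) * y t - 2 * z t * (y t - 1) ^ 2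
          - (y t - 1) * ((θ₀ - θ₁ + θinf) / 2 * y t - (3 * θ₀ + θ₁ + θinf) / 2))
      ∧ (-(Real.pi : ℂ) * ℏ * (t : ℂ) * deriv z t
        = y t * z t * (z t + (θ₀ - θ₁ + θinf) / 2)
          - (1 / y t) * (z t + θ₀) * (z t + (θ₀ + θ₁ + θinf) / 2))
      ∧ (-(Real.pi : ℂ) * ℏ * (t : ℂ) * deriv u t / u t
        = -2 * z t - θ₀ + y t * (z t + (θ₀ - θ₁ + θinf) / 2)
          + (1 / y t) * (z t + (θ₀ + θ₁ + θinf) / 2)))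
    (σ : ℝ → ℂ)
    (hσ : ∀ t : ℝ, σ t = -2 * z t ^ 2 - z t * (2 * θ₀ + θinf + (t : ℂ))
        + y t * z t * (z t + (θ₀ - θ₁ + θinf) / 2)
        + ((z t + θ₀) / y t) * (z t + (θ₀ + θ₁ + θinf) / 2)) :
    ∀ t ∈ I, DifferentiableAt ℝ σ t ∧ DifferentiableAt ℝ (deriv σ) t ∧
      -((Real.pi : ℂ) * ℏ * (t : ℂ) * deriv (deriv σ) t) ^ 2
        + (σ t + 2 * (deriv σ t) ^ 2 - (2 * θ₀ + θinf + (t : ℂ)) * deriv σ t) ^ 2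
      = 4 * deriv σ t * (deriv σ t - θ₀) * (deriv σ t - (θ₀ - θ₁ + θinf) / 2)
          * (deriv σ t - (θ₀ + θ₁ + θinf) / 2) :=
  statement2_general I hIopen hI0 ℏ hℏ θ₀ θ₁ θinf z y u hz hy hy0 hsys σ hσ
end

section
/- Let I ⊆ ℝ be an open interval with 0 ∉ I, let ℏ ∈ ℂ be nonzero, and let z, y, u : I → ℂ be functions with y nonvanishing, z twice differentiable and y differentiable, satisfying the Painlevé 5 differential system with all monodromies vanishing (θ₀ = θ₁ = θ∞ = 0): −πℏ t y′ = t y − 2z(y−1)², −πℏ t z′ = y z² − z²/y, −πℏ t u′/u = −2z + yz + z/y. Define σ(t) = −2z(t)² − t z(t) + y(t)z(t)² + z(t)²/y(t). Then σ satisfies the Chazy-type equation −(πℏ t σ″(t))² + (t σ′(t) − σ(t))(t σ′(t) − σ(t) − 4σ′(t)²) = 0 for all t ∈ I. -/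
/-!
Along a solution of the system the function σ is a primitive of −z, so σ″ = −z′ and the
z-equation gives (πℏtσ″)² = (yz² − z²/y)². On the other side tσ′ − σ = −z²(y − 1)²/y and
tσ′ − σ − 4σ′² = −z²(y + 1)²/y, whose product is the same square z⁴(y² − 1)²/y².
-/

open Filter

namespace Painleve5

noncomputable def sigma (z y : ℝ → ℂ) (t : ℝ) : ℂ :=
  -2 * z t ^ 2 - (t : ℂ) * z t + y t * z t ^ 2 + z t ^ 2 / y t

theorem hasDerivAt_sigma {z y : ℝ → ℂ} {z' y' : ℂ} {t : ℝ} (hz : HasDerivAt z z' t)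
    (hy : HasDerivAt y y' t) (hy0 : y t ≠ 0) :
    HasDerivAt (sigma z y)
      (-2 * (2 * z t * z') - (1 * z t + t * z') + (y' * z t ^ 2 + y t * (2 * z t * z'))
        + (2 * z t * z' * y t - z t ^ 2 * y') / y t ^ 2) t := by
  have hsq : HasDerivAt (fun s => z s ^ 2) (2 * z t * z') t := by
    simpa using hz.fun_pow 2
  have hid : HasDerivAt (fun s : ℝ => (s : ℂ)) 1 t := Complex.ofRealCLM.hasDerivAt
  exact (((hsq.const_mul (-2 : ℂ)).sub (hid.mul hz)).add (hy.mul hsq)).add (hsq.div hy hy0)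

/-- `c` stands for −πℏt. -/
theorem hasDerivAt_sigma_of_system {z y : ℝ → ℂ} {z' y' c : ℂ} {t : ℝ}
    (hz : HasDerivAt z z' t) (hy : HasDerivAt y y' t) (hy0 : y t ≠ 0) (hc : c ≠ 0)
    (hy' : c * y' = t * y t - 2 * z t * (y t - 1) ^ 2)
    (hz' : c * z' = y t * z t ^ 2 - z t ^ 2 / y t) :
    HasDerivAt (sigma z y) (-z t) t := by
  refine (hasDerivAt_sigma hz hy hy0).congr_deriv (mul_left_cancel₀ hc ?_)
  linear_combination (norm := skip)
    (-4 * z t + 2 * y t * z t + 2 * z t / y t - t) * hz' + (z t ^ 2 - z t ^ 2 / y t ^ 2) * hy'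
  field_simp
  ring

theorem chazy_identity {a t y z z' : ℂ} (hy : y ≠ 0) (hz' : -a * z' = y * z ^ 2 - z ^ 2 / y) :
    -(a * -z') ^ 2 + (t * -z - (-2 * z ^ 2 - t * z + y * z ^ 2 + z ^ 2 / y))
      * (t * -z - (-2 * z ^ 2 - t * z + y * z ^ 2 + z ^ 2 / y) - 4 * (-z) ^ 2) = 0 := by
  have h : a * -z' = y * z ^ 2 - z ^ 2 / y := by linear_combination hz'
  rw [h]
  field_simp
  ring

end Painleve5

open Painleve5

theorem statement3_general
    (I : Set ℝ) (hIopen : IsOpen I) (hI0 : (0 : ℝ) ∉ I)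
    (ℏ : ℂ) (hℏ : ℏ ≠ 0)
    (z y u : ℝ → ℂ)
    (hz : ∀ t ∈ I, DifferentiableAt ℝ z t)
    (hy : ∀ t ∈ I, DifferentiableAt ℝ y t)
    (hy0 : ∀ t ∈ I, y t ≠ 0)
    (hsys : ∀ t ∈ I,
      (-(Real.pi : ℂ) * ℏ * (t : ℂ) * deriv y t
        = (t : ℂ) * y t - 2 * z t * (y t - 1) ^ 2)
      ∧ (-(Real.pi : ℂ) * ℏ * (t : ℂ) * deriv z t = y t * z t ^ 2 - z t ^ 2 / y t)
      ∧ (-(Real.pi : ℂ) * ℏ * (t : ℂ) * deriv u t / u t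
        = -2 * z t + y t * z t + z t / y t))
    (σ : ℝ → ℂ)
    (hσ : ∀ t : ℝ, σ t = -2 * z t ^ 2 - (t : ℂ) * z t + y t * z t ^ 2 + z t ^ 2 / y t) :
    ∀ t ∈ I,
      -((Real.pi : ℂ) * ℏ * (t : ℂ) * deriv (deriv σ) t) ^ 2
        + ((t : ℂ) * deriv σ t - σ t)
          * ((t : ℂ) * deriv σ t - σ t - 4 * (deriv σ t) ^ 2) = 0 := by
  obtain rfl : σ = sigma z y := funext hσ
  have hσ' : ∀ t ∈ I, deriv (sigma z y) t = -z t := by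
    intro t ht
    have hc : -(Real.pi : ℂ) * ℏ * (t : ℂ) ≠ 0 := by
      have ht0 : t ≠ 0 := fun h => hI0 (h ▸ ht)
      simp [Real.pi_ne_zero, hℏ, ht0]
    exact (hasDerivAt_sigma_of_system (hz t ht).hasDerivAt (hy t ht).hasDerivAt (hy0 t ht) hc
      (hsys t ht).1 (hsys t ht).2.1).deriv
  intro t ht
  have hσ'' : deriv (deriv (sigma z y)) t = -deriv z t := by
    rw [(eventuallyEq_of_mem (hIopen.mem_nhds ht) hσ').deriv_eq, deriv.fun_neg]
  rw [hσ'', hσ' t ht]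
  exact chazy_identity (hy0 t ht) (by linear_combination (hsys t ht).2.1)

/-- If (z, y, u) solves the Painlevé 5 differential system with vanishing
monodromies on an open interval I not containing 0, with z twice differentiable
and y, u differentiable, then σ = −2z² − tz + yz² + z²/y satisfies the
Chazy-type equation −(πℏtσ″)² + (tσ′−σ)(tσ′−σ−4σ′²) = 0 on I. -/
theorem statement3
    (I : Set ℝ) (hIopen : IsOpen I) (hIconn : I.OrdConnected) (hI0 : (0 : ℝ) ∉ I)
    (ℏ : ℂ) (hℏ : ℏ ≠ 0)
    (z y u : ℝ → ℂ)
    (hz : ∀ t ∈ I, DifferentiableAt ℝ z t)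
    (hz' : ∀ t ∈ I, DifferentiableAt ℝ (deriv z) t)
    (hy : ∀ t ∈ I, DifferentiableAt ℝ y t)
    (hu : ∀ t ∈ I, DifferentiableAt ℝ u t)
    (hy0 : ∀ t ∈ I, y t ≠ 0)
    (hsys : ∀ t ∈ I,
      (-(Real.pi : ℂ) * ℏ * (t : ℂ) * deriv y t
        = (t : ℂ) * y t - 2 * z t * (y t - 1) ^ 2)
      ∧ (-(Real.pi : ℂ) * ℏ * (t : ℂ) * deriv z t = y t * z t ^ 2 - z t ^ 2 / y t)
      ∧ (-(Real.pi : ℂ) * ℏ * (t : ℂ) * deriv u t / u t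
        = -2 * z t + y t * z t + z t / y t))
    (σ : ℝ → ℂ)
    (hσ : ∀ t : ℝ, σ t = -2 * z t ^ 2 - (t : ℂ) * z t + y t * z t ^ 2 + z t ^ 2 / y t) :
    ∀ t ∈ I,
      -((Real.pi : ℂ) * ℏ * (t : ℂ) * deriv (deriv σ) t) ^ 2
        + ((t : ℂ) * deriv σ t - σ t)
          * ((t : ℂ) * deriv σ t - σ t - 4 * (deriv σ t) ^ 2) = 0 :=
  statement3_general I hIopen hI0 ℏ hℏ z y u hz hy hy0 hsys σ hσ
end

section
/- Let (σₖ)ₖ≥0 be the sequence of rational numbers defined by σ₀ = 1/16 and, for all k ≥ 1, σₖ = 16 Σ_{j=0}^{k−1} (2−2j)(1−2j)(4+2j−2k)(3+2j−2k) σⱼ σ_{k−j−1} − 16 Σ_{i=1}^{k−1} (2i−1)(1−2k+2i) σᵢ σ_{k−i} − 64 Σ_{i=1}^{k−1} Σ_{j=0}^{i} (2−2j)(2−2i+2j)(1−2k+2i) σⱼ σ_{i−j} σ_{k−i}. Then for every k ≥ 2, σₖ is an integer. -/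
/-!
By strong induction, σⱼ ∈ ℤ for 2 ≤ j < k, so the only denominators come from σ₀ = 1/16 and
σ₁ = 1/4. Writing l = k − j − 1, k − i and i − j for the second index, each summand factors
into per-index weights:
16·(2−2j)(1−2j)(2−2l)(1−2l)·σⱼσₗ = w(j)·w(l) with w(j) = 8(1−j)(1−2j)σⱼ,
16·(2i−1)(1−2l)·σᵢσₗ = −h(i)·h(l) with h(i) = 4(2i−1)σᵢ, and
64·(2−2j)(2−2m)(1−2l)·σⱼσₘσₗ = 4·v(j)·v(m)·(1−2l)σₗ with v(j) = 8(1−j)σⱼ.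
The factors 1 − j make σ₁ harmless in w and v, so 2w and 2v are integral everywhere and w/2, v/2
are integral at positive indices; as the two indices of a product never both vanish, the product
is integral. Likewise h is integral at positive indices, and in the last product the factor 4
absorbs the denominator of (1−2l)σₗ = −1/4 at l = 1.
-/

open Finset

theorem Subring.mul_mem_of_mul_mem_of_div_mem {K : Type*} [Field K] (S : Subring K)
    {a b c : K} (hc : c ≠ 0) (ha : c * a ∈ S) (hb : b / c ∈ S) : a * b ∈ S := by
  convert mul_mem ha hb using 1
  field_simp

variable {σ : ℕ → ℚ} {k : ℕ}

theorem Subring.mul_mem_of_one_le_add {K : Type*} [Field K] {S : Subring K} {w : ℕ → K} {c : K}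
    (hc : c ≠ 0) (hw : ∀ j < k, c * w j ∈ S) (hw' : ∀ j < k, 1 ≤ j → w j / c ∈ S)
    {j l : ℕ} (hj : j < k) (hl : l < k) (hjl : 1 ≤ j + l) : w j * w l ∈ S := by
  rcases Nat.eq_zero_or_pos j with rfl | hj0
  · exact S.mul_mem_of_mul_mem_of_div_mem hc (hw 0 hj) (hw' l hl (by omega))
  · rw [mul_comm]
    exact S.mul_mem_of_mul_mem_of_div_mem hc (hw l hl) (hw' j hj hj0)

theorem first_summand_mem (h0 : σ 0 = 1 / 16) (hσ : ∀ j < k, 2 ≤ j → σ j ∈ (⊥ : Subring ℚ))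
    {j : ℕ} (hj : j < k) (hk : 2 ≤ k) :
    16 * ((2 - 2 * (j : ℚ)) * (1 - 2 * (j : ℚ)) * (4 + 2 * (j : ℚ) - 2 * (k : ℚ))
      * (3 + 2 * (j : ℚ) - 2 * (k : ℚ)) * σ j * σ (k - j - 1)) ∈ (⊥ : Subring ℚ) := by
  set w : ℕ → ℚ := fun i => 8 * (1 - i) * (1 - 2 * i) * σ i
  have hw : ∀ i < k, 2 * w i ∈ (⊥ : Subring ℚ) := fun i hi => by
    rcases i with _ | _ | i
    · norm_num [w, h0]
    · simp [w]
    · have := hσ (i + 2) hi (by omega)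
      aesop
  have hw' : ∀ i < k, 1 ≤ i → w i / 2 ∈ (⊥ : Subring ℚ) := fun i hi hi1 => by
    rcases i with _ | _ | i
    · omega
    · simp [w]
    · have := hσ (i + 2) hi (by omega)
      convert_to 4 * (1 - ((i + 2 : ℕ) : ℚ)) * (1 - 2 * ((i + 2 : ℕ) : ℚ)) * σ (i + 2) ∈ _
      · simp only [w]; ring
      · aesop
  have hfactor : 16 * ((2 - 2 * (j : ℚ)) * (1 - 2 * (j : ℚ)) * (4 + 2 * (j : ℚ) - 2 * (k : ℚ))
      * (3 + 2 * (j : ℚ) - 2 * (k : ℚ)) * σ j * σ (k - j - 1)) = w j * w (k - j - 1) := by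
    simp only [w]
    rw [Nat.cast_sub (by omega), Nat.cast_sub hj.le]
    ring
  rw [hfactor]
  exact Subring.mul_mem_of_one_le_add two_ne_zero hw hw' hj (by omega) (by omega)

theorem second_summand_mem (h1 : σ 1 = 1 / 4) (hσ : ∀ j < k, 2 ≤ j → σ j ∈ (⊥ : Subring ℚ))
    {i : ℕ} (hi : i ∈ Icc 1 (k - 1)) :
    16 * ((2 * (i : ℚ) - 1) * (1 - 2 * (k : ℚ) + 2 * (i : ℚ)) * σ i * σ (k - i))
      ∈ (⊥ : Subring ℚ) := by
  rw [mem_Icc] at hi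
  have hh : ∀ j < k, 1 ≤ j → 4 * (2 * (j : ℚ) - 1) * σ j ∈ (⊥ : Subring ℚ) := fun j hj hj1 => by
    rcases j with _ | _ | j
    · omega
    · norm_num [h1]
    · have := hσ (j + 2) hj (by omega)
      aesop
  have hfactor : 16 * ((2 * (i : ℚ) - 1) * (1 - 2 * (k : ℚ) + 2 * (i : ℚ)) * σ i * σ (k - i))
      = -((4 * (2 * (i : ℚ) - 1) * σ i) * (4 * (2 * ((k - i : ℕ) : ℚ) - 1) * σ (k - i))) := by
    rw [Nat.cast_sub (by omega)]
    ring
  rw [hfactor]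
  exact neg_mem (mul_mem (hh i (by omega) hi.1) (hh (k - i) (by omega) (by omega)))

theorem third_summand_mem (h0 : σ 0 = 1 / 16) (h1 : σ 1 = 1 / 4)
    (hσ : ∀ j < k, 2 ≤ j → σ j ∈ (⊥ : Subring ℚ))
    {i j : ℕ} (hi : i ∈ Icc 1 (k - 1)) (hj : j ∈ range (i + 1)) :
    64 * ((2 - 2 * (j : ℚ)) * (2 - 2 * (i : ℚ) + 2 * (j : ℚ)) * (1 - 2 * (k : ℚ) + 2 * (i : ℚ))
      * σ j * σ (i - j) * σ (k - i)) ∈ (⊥ : Subring ℚ) := by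
  rw [mem_Icc] at hi
  rw [mem_range] at hj
  set v : ℕ → ℚ := fun n => 8 * (1 - n) * σ n
  have hv : ∀ n < k, 2 * v n ∈ (⊥ : Subring ℚ) := fun n hn => by
    rcases n with _ | _ | n
    · norm_num [v, h0]
    · simp [v]
    · have := hσ (n + 2) hn (by omega)
      aesop
  have hv' : ∀ n < k, 1 ≤ n → v n / 2 ∈ (⊥ : Subring ℚ) := fun n hn hn1 => by
    rcases n with _ | _ | n
    · omega
    · simp [v]
    · have := hσ (n + 2) hn (by omega)
      convert_to 4 * (1 - ((n + 2 : ℕ) : ℚ)) * σ (n + 2) ∈ _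
      · simp only [v]; ring
      · aesop
  have hfactor : 64 * ((2 - 2 * (j : ℚ)) * (2 - 2 * (i : ℚ) + 2 * (j : ℚ))
      * (1 - 2 * (k : ℚ) + 2 * (i : ℚ)) * σ j * σ (i - j) * σ (k - i))
      = 4 * (v j * v (i - j)) * ((1 - 2 * ((k - i : ℕ) : ℚ)) * σ (k - i)) := by
    simp only [v]
    rw [Nat.cast_sub (by omega), Nat.cast_sub (by omega)]
    ring
  rw [hfactor]
  rcases (show k - i = 1 ∨ 2 ≤ k - i by omega) with hl | hl
  · have hvv := Subring.mul_mem_of_one_le_add two_ne_zero hv hv' (j := j) (l := i - j)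
      (by omega) (by omega) (by omega)
    rw [hl, h1]
    convert neg_mem hvv using 1
    push_cast
    ring
  · have hq : (1 - 2 * ((k - i : ℕ) : ℚ)) * σ (k - i) ∈ (⊥ : Subring ℚ) := by
      have := hσ (k - i) (by omega) hl
      aesop
    rw [show 4 * (v j * v (i - j)) = 2 * v j * (2 * v (i - j)) by ring]
    exact mul_mem (mul_mem (hv j (by omega)) (hv (i - j) (by omega))) hq

/-- For the recursively defined sequence of coefficients of the ℏ-expansion of the
Painlevé 5 σ-function, σₖ is an integer for every k ≥ 2. -/
theorem statement7 (σ : ℕ → ℚ)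
    (h0 : σ 0 = 1 / 16)
    (hrec : ∀ k : ℕ, 1 ≤ k →
      σ k =
        16 * ∑ j ∈ Finset.range k,
            (2 - 2 * (j : ℚ)) * (1 - 2 * (j : ℚ)) * (4 + 2 * (j : ℚ) - 2 * (k : ℚ))
              * (3 + 2 * (j : ℚ) - 2 * (k : ℚ)) * σ j * σ (k - j - 1)
        - 16 * ∑ i ∈ Finset.Icc 1 (k - 1),
            (2 * (i : ℚ) - 1) * (1 - 2 * (k : ℚ) + 2 * (i : ℚ)) * σ i * σ (k - i)
        - 64 * ∑ i ∈ Finset.Icc 1 (k - 1), ∑ j ∈ Finset.range (i + 1),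
            (2 - 2 * (j : ℚ)) * (2 - 2 * (i : ℚ) + 2 * (j : ℚ))
              * (1 - 2 * (k : ℚ) + 2 * (i : ℚ)) * σ j * σ (i - j) * σ (k - i)) :
    ∀ k : ℕ, 2 ≤ k → ∃ m : ℤ, σ k = (m : ℚ) := by
  have h1 : σ 1 = 1 / 4 := by norm_num [hrec 1 le_rfl, h0]
  suffices h : ∀ k, 2 ≤ k → σ k ∈ (⊥ : Subring ℚ) from
    fun k hk => (Subring.mem_bot.1 (h k hk)).imp fun _ => Eq.symm
  intro k
  induction k using Nat.strong_induction_on with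
  | _ k ih =>
  intro hk
  rw [hrec k (by omega)]
  simp only [Finset.mul_sum]
  exact sub_mem (sub_mem
    (sum_mem fun j hj => first_summand_mem h0 ih (mem_range.1 hj) hk)
    (sum_mem fun i hi => second_summand_mem h1 ih hi))
    (sum_mem fun i hi => sum_mem fun j hj => third_summand_mem h0 h1 ih hi hj)
end

section
/- Let ℏ, μ, f_ξ, f_η ∈ ℂ with μ ≠ 0, let ξ ≠ η be complex numbers, let R₀, C_ξ, C_η be 2×2 complex matrices, and set R_ζ = (ζ/2)σ₃ + R₀ for ζ ∈ {ξ, η}. Assume M_ζ = (1/2)I₂ + (f_ζ/μ) R_ζ − ℏ C_ζ for ζ ∈ {ξ, η}. Then [ M_η/(ξ−η) + (f_η/(2μ)) σ₃ , M_ξ ] = −ℏ ( (f_η/(μ(ξ−η))) [R_ξ, C_ξ] + (1/(ξ−η)) [C_η, M_ξ] ). In particular, the left-hand side, which is the action of the insertion operator δ_η on M(ξ), is proportional to ℏ. -/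
/-!
Since `R_ξ - R_η = ((ξ - η)/2) σ₃`, the σ₃-term is absorbed into `M_η/(ξ - η)`, turning the
bracket's left entry into `(ξ - η)⁻¹ (1/2 + (f_η/μ) R_ξ - ℏ C_η)`. Its `1/2 + (f_η/μ) R_ξ` part
commutes with the ℏ-free part `1/2 + (f_ξ/μ) R_ξ` of `M_ξ`, so only terms carrying a factor ℏ
survive.
-/

open Matrix

noncomputable section

/-- The diagonal Pauli matrix σ₃. -/
def sigma3 : Matrix (Fin 2) (Fin 2) ℂ := !![1, 0; 0, -1]

section
variable {K A : Type*}

theorem inv_sub_smul_affine_add_smul_eq [Field K] [AddCommGroup A] [Module K A] {ξ η : K} (hne : ξ ≠ η)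
    (a : K) (S R₀ X Y : A) :
    (ξ - η)⁻¹ • (X + a • ((η / 2) • S + R₀) - Y) + (a / 2) • S
      = (ξ - η)⁻¹ • (X + a • ((ξ / 2) • S + R₀) - Y) := by
  have hξη : ξ - η ≠ 0 := sub_ne_zero.mpr hne
  match_scalars <;> field_simp
  ring

theorem commutator_smul_one_add_smul_sub_smul [CommRing K] [Ring A] [Algebra K A] (c c' a b h : K)
    (R C D : A) {M : A} (hM : M = c' • 1 + b • R - h • C) :
    (c • 1 + a • R - h • D) * M - M * (c • 1 + a • R - h • D)
      = -h • (a • (R * C - C * R) + (D * M - M * D)) := by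
  subst hM
  simp only [mul_add, add_mul, mul_sub, sub_mul, smul_mul_assoc, mul_smul_comm, one_mul, mul_one]
  module

end

theorem statement19_general
    (ℏ μ fξ fη : ℂ)
    (ξ η : ℂ) (hne : ξ ≠ η)
    (R₀ Cξ Cη Mξ Mη Rξ Rη : Matrix (Fin 2) (Fin 2) ℂ)
    (hRξ : Rξ = (ξ / 2) • sigma3 + R₀)
    (hRη : Rη = (η / 2) • sigma3 + R₀)
    (hMξ : Mξ = (1 / 2 : ℂ) • (1 : Matrix (Fin 2) (Fin 2) ℂ) + (fξ / μ) • Rξ - ℏ • Cξ)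
    (hMη : Mη = (1 / 2 : ℂ) • (1 : Matrix (Fin 2) (Fin 2) ℂ) + (fη / μ) • Rη - ℏ • Cη) :
    ((ξ - η)⁻¹ • Mη + (fη / (2 * μ)) • sigma3) * Mξ
        - Mξ * ((ξ - η)⁻¹ • Mη + (fη / (2 * μ)) • sigma3)
      = (-ℏ) • ((fη / (μ * (ξ - η))) • (Rξ * Cξ - Cξ * Rξ)
          + (ξ - η)⁻¹ • (Cη * Mξ - Mξ * Cη)) := by
  have hshift : (ξ - η)⁻¹ • Mη + (fη / (2 * μ)) • sigma3
      = (ξ - η)⁻¹ • ((1 / 2 : ℂ) • 1 + (fη / μ) • Rξ - ℏ • Cη) := by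
    rw [hMη, hRη, hRξ, show fη / (2 * μ) = fη / μ / 2 by ring]
    exact inv_sub_smul_affine_add_smul_eq hne _ _ _ _ _
  rw [hshift, smul_mul_assoc, mul_smul_comm, ← smul_sub,
    commutator_smul_one_add_smul_sub_smul _ _ _ _ _ _ _ _ hMξ,
    show fη / (μ * (ξ - η)) = (ξ - η)⁻¹ * (fη / μ) by rw [div_mul_eq_div_div_swap]; ring]
  module

/-- The action of the insertion operator δ_η on the projector M(ξ),
δ_η M(ξ) = [M(η)/(ξ−η) + (f(η)/(2μ))σ₃, M(ξ)], is proportional to ℏ: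
it equals −ℏ((f_η/(μ(ξ−η)))[R_ξ, C_ξ] + (1/(ξ−η))[C_η, M_ξ]). -/
theorem statement19
    (ℏ μ fξ fη : ℂ) (hℏ : ℏ ≠ 0) (hμ : μ ≠ 0)
    (ξ η : ℂ) (hne : ξ ≠ η)
    (R₀ Cξ Cη Mξ Mη Rξ Rη : Matrix (Fin 2) (Fin 2) ℂ)
    (hRξ : Rξ = (ξ / 2) • sigma3 + R₀)
    (hRη : Rη = (η / 2) • sigma3 + R₀)
    (hMξ : Mξ = (1 / 2 : ℂ) • (1 : Matrix (Fin 2) (Fin 2) ℂ) + (fξ / μ) • Rξ - ℏ • Cξ)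
    (hMη : Mη = (1 / 2 : ℂ) • (1 : Matrix (Fin 2) (Fin 2) ℂ) + (fη / μ) • Rη - ℏ • Cη) :
    ((ξ - η)⁻¹ • Mη + (fη / (2 * μ)) • sigma3) * Mξ
        - Mξ * ((ξ - η)⁻¹ • Mη + (fη / (2 * μ)) • sigma3)
      = (-ℏ) • ((fη / (μ * (ξ - η))) • (Rξ * Cξ - Cξ * Rξ)
          + (ξ - η)⁻¹ • (Cη * Mξ - Mξ * Cη)) :=
  statement19_general ℏ μ fξ fη ξ η hne R₀ Cξ Cη Mξ Mη Rξ Rη hRξ hRη hMξ hMη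
end
end
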